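/- For l = (l₁, …, l_n) ∈ [0,1]ⁿ, a closed spherical polygon in the unit 3-sphere with edge lengths π·l₁, …, π·l_n exists if and only if the ℓ¹-distance from l to the set of odd vertices of [0,1]ⁿ is at least 1. -/

import Mathlib

open Finset

/-- Geodesic distance on the unit sphere of `ℝ⁴`. -/
noncomputable def sphereDist4 (x y : EuclideanSpace ℝ (Fin 4)) : ℝ :=
  Real.arccos (inner ℝ x y)

/-!
Multiplying the vertices of a closed polygon by signs `± 1`, flipped after each edge `i` with
`vᵢ = 1`, replaces the lengths `π lᵢ` of these edges by `π (1 - lᵢ)`; when `v` is an odd vertex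
the polygon becomes a path from `p₁` to `-p₁`, so `π ≤ π ∑ |lᵢ - vᵢ|` by the triangle inequality.

Conversely, a chain with edge lengths `π l` joins any two points at distance `π L` provided
`(l, L)` is at `ℓ¹`-distance at least `1` from the odd vertices of the cube. By induction on the
number of edges: the last two edges are replaced by a single edge whose length `L'` keeps this
condition for the shorter chain and satisfies the triangle inequalities with the lengths of the
two removed edges, and in dimension at least `3` a spherical triangle with such side lengths
exists over any given side.
-/

open Real InnerProductGeometry Module
open scoped RealInnerProductSpace

section Cube

variable {ι : Type*} [Fintype ι] [DecidableEq ι]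

def vertexDist (l : ι → ℝ) (S : Finset ι) : ℝ :=
  ∑ i, |l i - if i ∈ S then 1 else 0|

/-- `(l, L)` is at `ℓ¹`-distance at least `1` from the odd vertices of the cube with one more
coordinate; the two conjuncts are the vertices with last coordinate `0` and `1`. -/
def IsClosingLength (l : ι → ℝ) (L : ℝ) : Prop :=
  (∀ S : Finset ι, Odd #S → 1 ≤ vertexDist l S + L) ∧
    ∀ S : Finset ι, Even #S → L ≤ vertexDist l S

theorem one_le_vertexDist_add_vertexDist (l : ι → ℝ) {S T : Finset ι} (h : S ≠ T) :
    1 ≤ vertexDist l S + vertexDist l T := by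
  obtain ⟨j, hj⟩ : ∃ j, ¬(j ∈ S ↔ j ∈ T) := by
    by_contra! h'
    exact h (Finset.ext h')
  calc (1 : ℝ) = |(if j ∈ T then 1 else 0) - if j ∈ S then 1 else 0| := by
        by_cases hS : j ∈ S <;> simp_all
    _ ≤ |l j - if j ∈ S then 1 else 0| + |l j - if j ∈ T then 1 else 0| := by
        rw [add_comm, abs_sub_comm (l j)]
        exact abs_sub_le _ _ _
    _ ≤ ∑ i, (|l i - if i ∈ S then 1 else 0| + |l i - if i ∈ T then 1 else 0|) :=
        single_le_sum (f := fun i => |l i - if i ∈ S then 1 else 0| +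
          |l i - if i ∈ T then 1 else 0|) (fun i _ => by positivity) (mem_univ j)
    _ = vertexDist l S + vertexDist l T := sum_add_distrib

theorem forall_zero_one_odd_sum_iff (P : (ι → ℝ) → Prop) :
    (∀ v : ι → ℝ, ((∀ i, v i = 0 ∨ v i = 1) ∧ ∃ m : ℤ, ∑ i, v i = 2 * (m : ℝ) + 1) → P v) ↔
      ∀ S : Finset ι, Odd #S → P fun i => if i ∈ S then 1 else 0 := by
  have hsum : ∀ S : Finset ι, ∑ i, (if i ∈ S then 1 else 0 : ℝ) = #S := fun S => by simp
  constructor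
  · rintro h S ⟨m, hm⟩
    refine h _ ⟨fun i => by split_ifs <;> simp, m, ?_⟩
    rw [hsum, hm]
    push_cast
    ring
  · rintro h v ⟨hv, m, hm⟩
    obtain ⟨S, rfl⟩ : ∃ S : Finset ι, v = fun i => if i ∈ S then 1 else 0 :=
      ⟨univ.filter (v · = 1), funext fun i => by rcases hv i with h | h <;> simp [h]⟩
    rw [hsum] at hm
    exact h S (Int.odd_coe_nat _ |>.mp ⟨m, by exact_mod_cast hm⟩)

end Cube

section Snoc

variable {m : ℕ}

theorem card_insert_last_map_castSuccEmb (S : Finset (Fin m)) :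
    #(insert (Fin.last m) (S.map Fin.castSuccEmb)) = #S + 1 := by
  rw [card_insert_of_notMem (by simp [Fin.castSucc_ne_last]), card_map]

theorem vertexDist_map_castSuccEmb {l : Fin (m + 1) → ℝ} (hl : 0 ≤ l (Fin.last m))
    (S : Finset (Fin m)) :
    vertexDist l (S.map Fin.castSuccEmb) = vertexDist (Fin.init l) S + l (Fin.last m) := by
  simp [vertexDist, Fin.sum_univ_castSucc, Fin.init, Fin.castSucc_ne_last, abs_of_nonneg hl]

theorem vertexDist_insert_last {l : Fin (m + 1) → ℝ} (hl : l (Fin.last m) ≤ 1)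
    (S : Finset (Fin m)) :
    vertexDist l (insert (Fin.last m) (S.map Fin.castSuccEmb)) =
      vertexDist (Fin.init l) S + (1 - l (Fin.last m)) := by
  simp [vertexDist, Fin.sum_univ_castSucc, Fin.init, Fin.castSucc_ne_last,
    abs_of_nonpos (sub_nonpos.mpr hl)]

theorem isClosingLength_init_last {l : Fin (m + 1) → ℝ} (hl : l (Fin.last m) ∈ Set.Icc 0 1)
    (h : ∀ S : Finset (Fin (m + 1)), Odd #S → 1 ≤ vertexDist l S) :
    IsClosingLength (Fin.init l) (l (Fin.last m)) := by
  refine ⟨fun S hS => ?_, fun S hS => ?_⟩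
  · rw [← vertexDist_map_castSuccEmb hl.1]
    exact h _ (by rwa [card_map])
  · have := h _ ((card_insert_last_map_castSuccEmb S).symm ▸ hS.add_one)
    rw [vertexDist_insert_last hl.2] at this
    linarith

theorem IsClosingLength.exists_init {l : Fin (m + 1) → ℝ} {L : ℝ} (h : IsClosingLength l L)
    (hc : l (Fin.last m) ∈ Set.Icc 0 1) (hL : L ∈ Set.Icc 0 1) :
    ∃ L', IsClosingLength (Fin.init l) L' ∧ |L' - l (Fin.last m)| ≤ L ∧
      L ≤ L' + l (Fin.last m) ∧ L' + l (Fin.last m) + L ≤ 2 := by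
  set c := l (Fin.last m)
  obtain ⟨hc₀, hc₁⟩ := hc
  obtain ⟨hL₀, hL₁⟩ := hL
  set d := vertexDist (Fin.init l)
  have hmap := vertexDist_map_castSuccEmb hc₀
  have hins := vertexDist_insert_last hc₁
  have hcard := card_insert_last_map_castSuccEmb (m := m)
  have hodd_map : ∀ S : Finset (Fin m), Odd #S → 1 ≤ d S + c + L := fun S hS => by
    rw [← hmap]; exact h.1 _ (by rwa [card_map])
  have hodd_ins : ∀ S : Finset (Fin m), Odd #S → L ≤ d S + (1 - c) := fun S hS => by
    rw [← hins]; exact h.2 _ (by rw [hcard]; exact hS.add_one)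
  have heven_map : ∀ S : Finset (Fin m), Even #S → L ≤ d S + c := fun S hS => by
    rw [← hmap]; exact h.2 _ (by rwa [card_map])
  have heven_ins : ∀ S : Finset (Fin m), Even #S → 1 ≤ d S + (1 - c) + L := fun S hS => by
    rw [← hins]; exact h.1 _ (by rw [hcard]; exact hS.add_one)
  -- `L'` is the largest value allowed by the triangle inequalities and the even vertices
  obtain ⟨T, hT, hT_min⟩ := (univ.filter fun S : Finset (Fin m) => Even #S).exists_min_image d
    ⟨∅, by simp⟩
  simp only [mem_filter, mem_univ, true_and] at hT hT_min
  set L' := min (min (L + c) (2 - L - c)) (d T)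
  have hL'_ge : c - L ≤ L' ∧ L - c ≤ L' :=
    ⟨le_min (le_min (by linarith) (by linarith)) (by linarith [heven_ins T hT]),
      le_min (le_min (by linarith) (by linarith)) (by linarith [heven_map T hT])⟩
  have hL'_le : L' ≤ L + c ∧ L' ≤ 2 - L - c :=
    ⟨(min_le_left _ _).trans (min_le_left _ _), (min_le_left _ _).trans (min_le_right _ _)⟩
  refine ⟨L', ⟨fun S hS => ?_, fun S hS => (min_le_right _ _).trans (hT_min S hS)⟩,
    abs_le.mpr ⟨by linarith, by linarith⟩, by linarith, by linarith⟩
  have hST : 1 ≤ d S + d T := one_le_vertexDist_add_vertexDist _ fun hST =>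
    (Nat.not_even_iff_odd.mpr hS) (hST ▸ hT)
  have : 1 - d S ≤ L' :=
    le_min (le_min (by linarith [hodd_map S hS]) (by linarith [hodd_ins S hS])) (by linarith)
  linarith

end Snoc

theorem cos_add_le_cos_and_cos_le_cos_sub {α β γ : ℝ} (h₁ : |α - β| ≤ γ) (h₂ : γ ≤ α + β)
    (h₃ : α + β + γ ≤ 2 * π) : cos (α + γ) ≤ cos β ∧ cos β ≤ cos (α - γ) := by
  obtain ⟨h₁, h₁'⟩ := abs_le.mp h₁
  have sin_mul_sin_nonneg : ∀ s t, 0 ≤ s → s ≤ 2 * π → 0 ≤ t → t ≤ 2 * π →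
      0 ≤ sin (s / 2) * sin (t / 2) := fun s t hs hs' ht ht' =>
    mul_nonneg (sin_nonneg_of_nonneg_of_le_pi (by linarith) (by linarith))
      (sin_nonneg_of_nonneg_of_le_pi (by linarith) (by linarith))
  constructor
  · have h := cos_sub_cos β (α + γ)
    rw [show (β + (α + γ)) / 2 = (α + β + γ) / 2 by ring,
      show (β - (α + γ)) / 2 = -((α + γ - β) / 2) by ring, sin_neg] at h
    linarith [sin_mul_sin_nonneg (α + β + γ) (α + γ - β) (by linarith) h₃ (by linarith)
      (by linarith)]
  · have h := cos_sub_cos (α - γ) β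
    rw [show (α - γ + β) / 2 = (α + β - γ) / 2 by ring,
      show (α - γ - β) / 2 = -((β + γ - α) / 2) by ring, sin_neg] at h
    linarith [sin_mul_sin_nonneg (α + β - γ) (β + γ - α) (by linarith) (by linarith)
      (by linarith) (by linarith)]

namespace InnerProductGeometry

variable {V : Type*} [NormedAddCommGroup V] [InnerProductSpace ℝ V]

theorem angle_le_sum_angle {r : ℕ → V} (h₀ : r 0 ≠ 0) (m : ℕ) :
    angle (r 0) (r m) ≤ ∑ k ∈ range m, angle (r k) (r (k + 1)) := by
  induction m with
  | zero => simp [angle_self h₀]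
  | succ m ih =>
    rw [sum_range_succ]
    linarith [angle_le_angle_add_angle (r 0) (r m) (r (m + 1))]

theorem angle_eq_of_inner_eq_cos {x y : V} (hx : ‖x‖ = 1) (hy : ‖y‖ = 1) {α : ℝ}
    (hα₀ : 0 ≤ α) (hα : α ≤ π) (h : ⟪x, y⟫ = cos α) : angle x y = α := by
  rw [angle, hx, hy, mul_one, div_one, h, arccos_cos hα₀ hα]

theorem exists_norm_eq_one_forall_inner_eq_zero (s : Finset V) (hs : #s < finrank ℝ V) :
    ∃ w : V, ‖w‖ = 1 ∧ ∀ v ∈ s, ⟪v, w⟫ = 0 := by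
  have : FiniteDimensional ℝ V := Module.finite_of_finrank_pos (by omega)
  set K := Submodule.span ℝ (s : Set V)
  obtain ⟨w, hwK, hw⟩ : ∃ w ∈ Kᗮ, w ≠ 0 := by
    apply Submodule.exists_mem_ne_zero_of_ne_bot
    intro h
    have := K.finrank_add_finrank_orthogonal
    rw [h, finrank_bot] at this
    have : finrank ℝ K ≤ #s := finrank_span_finset_le_card s
    omega
  refine ⟨NormedSpace.normalize w, NormedSpace.norm_normalize_eq_one_iff.mpr hw, fun v hv => ?_⟩
  rw [NormedSpace.normalize, real_inner_smul_right,
    Submodule.inner_right_of_mem_orthogonal (Submodule.subset_span hv) hwK, mul_zero]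

theorem exists_eq_cos_angle_smul_add_sin_angle_smul (hV : 1 < finrank ℝ V) {x z : V}
    (hx : ‖x‖ = 1) (hz : ‖z‖ = 1) :
    ∃ u : V, ‖u‖ = 1 ∧ ⟪x, u⟫ = 0 ∧ z = cos (angle x z) • x + sin (angle x z) • u := by
  set γ := angle x z
  have hxx : ⟪x, x⟫ = 1 := inner_self_eq_one_of_norm_eq_one hx
  have hzz : ⟪z, z⟫ = 1 := inner_self_eq_one_of_norm_eq_one hz
  have hxz : ⟪x, z⟫ = cos γ := inner_eq_cos_angle_of_norm_eq_one hx hz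
  set d := z - cos γ • x
  have hxd : ⟪x, d⟫ = 0 := by
    rw [inner_sub_right, real_inner_smul_right, hxx, hxz, mul_one, sub_self]
  have hd : ‖d‖ = sin γ := by
    refine (pow_left_inj₀ (norm_nonneg d) (sin_angle_nonneg x z) two_ne_zero).mp ?_
    rw [← real_inner_self_eq_norm_sq, sin_sq]
    simp only [d, inner_sub_left, inner_sub_right, real_inner_smul_left, real_inner_smul_right,
      real_inner_comm x z, hxx, hzz, hxz]
    ring
  have hz_eq : z = cos γ • x + ‖d‖ • NormedSpace.normalize d := by
    rw [NormedSpace.norm_smul_normalize, add_sub_cancel]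
  by_cases hd₀ : d = 0
  · obtain ⟨u, hu, hxu⟩ := exists_norm_eq_one_forall_inner_eq_zero {x} (by simpa using hV)
    refine ⟨u, hu, hxu x (mem_singleton_self x), ?_⟩
    simpa [← hd, hd₀] using hz_eq
  · refine ⟨NormedSpace.normalize d, NormedSpace.norm_normalize_eq_one_iff.mpr hd₀, ?_, ?_⟩
    · rw [NormedSpace.normalize, real_inner_smul_right, hxd, mul_zero]
    · rwa [← hd]

theorem exists_angle_eq_and_angle_eq (hV : 2 < finrank ℝ V) {x z : V} (hx : ‖x‖ = 1)
    (hz : ‖z‖ = 1) {α β : ℝ} (h₁ : |α - β| ≤ angle x z) (h₂ : angle x z ≤ α + β)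
    (h₃ : α + β + angle x z ≤ 2 * π) :
    ∃ y : V, ‖y‖ = 1 ∧ angle x y = α ∧ angle y z = β := by
  classical
  set γ := angle x z
  obtain ⟨u, hu, hxu, hz_eq⟩ := exists_eq_cos_angle_smul_add_sin_angle_smul (by omega) hx hz
  obtain ⟨w, hw, hw_orth⟩ := exists_norm_eq_one_forall_inner_eq_zero {x, u}
    ((card_le_two).trans_lt hV)
  have hxw : ⟪x, w⟫ = 0 := hw_orth x (by simp)
  have huw : ⟪u, w⟫ = 0 := hw_orth u (by simp)
  have hxx : ⟪x, x⟫ = 1 := inner_self_eq_one_of_norm_eq_one hx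
  have huu : ⟪u, u⟫ = 1 := inner_self_eq_one_of_norm_eq_one hu
  have hww : ⟪w, w⟫ = 1 := inner_self_eq_one_of_norm_eq_one hw
  obtain ⟨hcos₁, hcos₂⟩ := cos_add_le_cos_and_cos_le_cos_sub h₁ h₂ h₃
  obtain ⟨h₁, h₁'⟩ := abs_le.mp h₁
  -- as `θ` runs over `[0, π]`, the inner product `f θ` of the point `y` below with `z` goes
  -- from `cos (α - γ)` down to `cos (α + γ)`
  set f : ℝ → ℝ := fun θ => cos α * cos γ + sin α * sin γ * cos θ
  obtain ⟨θ, -, hθ⟩ : cos β ∈ f '' Set.Icc 0 π :=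
    intermediate_value_Icc' pi_pos.le (by fun_prop : Continuous f).continuousOn
      ⟨by simpa [f, cos_add] using hcos₁, by simpa [f, cos_sub] using hcos₂⟩
  set y := cos α • x + sin α • (cos θ • u + sin θ • w)
  have hy : ‖y‖ = 1 := by
    refine (pow_left_inj₀ (norm_nonneg y) zero_le_one two_ne_zero).mp ?_
    rw [← real_inner_self_eq_norm_sq]
    simp only [y, inner_add_left, inner_add_right, real_inner_smul_left, real_inner_smul_right,
      real_inner_comm x u, real_inner_comm x w, real_inner_comm u w, hxx, huu, hww, hxu, hxw, huw]
    linear_combination (sin α ^ 2) * sin_sq_add_cos_sq θ + sin_sq_add_cos_sq α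
  refine ⟨y, hy, angle_eq_of_inner_eq_cos hx hy (by linarith) (by linarith) ?_,
    angle_eq_of_inner_eq_cos hy hz (by linarith) (by linarith) ?_⟩
  · simp only [y, inner_add_right, real_inner_smul_right, hxx, hxu, hxw]
    ring
  · rw [← hθ, hz_eq]
    simp only [y, f, inner_add_left, inner_add_right, real_inner_smul_left,
      real_inner_smul_right, real_inner_comm x u, real_inner_comm x w, real_inner_comm u w, hxx,
      huu, hxu, hxw, huw]
    ring

theorem pi_le_sum_abs_angle_sub {p : ℕ → V} {n : ℕ} (h₀ : p 0 ≠ 0) (hn : p n = p 0)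
    {S : Finset ℕ} (hS : S ⊆ range n) (hodd : Odd #S) :
    π ≤ ∑ k ∈ range n, |angle (p k) (p (k + 1)) - if k ∈ S then π else 0| := by
  set s : ℕ → ℝ := fun k => if k ∈ S then -1 else 1
  set ε : ℕ → ℝ := fun k => ∏ i ∈ range k, s i
  have hε : ∀ k, ε k ≠ 0 := fun k => prod_ne_zero_iff.mpr fun i _ => by
    simp only [s]; split_ifs <;> norm_num
  have hεn : ε n = -1 := by
    simp only [ε, s, prod_ite_mem, inter_eq_right.mpr hS, prod_const, hodd.neg_one_pow]
  have hedge : ∀ k, angle (ε k • p k) (ε (k + 1) • p (k + 1)) =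
      |angle (p k) (p (k + 1)) - if k ∈ S then π else 0| := by
    intro k
    rw [show ε (k + 1) = ε k * s k from prod_range_succ _ _, mul_smul, angle_smul_smul (hε k)]
    by_cases hk : k ∈ S
    · simp [s, hk, angle_neg_right, abs_of_nonpos, angle_le_pi]
    · simp [s, hk, abs_of_nonneg, angle_nonneg]
  calc π = angle (ε 0 • p 0) (ε n • p n) := by
        simp [ε, hεn, hn, angle_self_neg_of_nonzero h₀]
    _ ≤ ∑ k ∈ range n, angle (ε k • p k) (ε (k + 1) • p (k + 1)) :=
        angle_le_sum_angle (r := fun k => ε k • p k) (by simpa [ε] using h₀) n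
    _ = _ := sum_congr rfl fun k _ => hedge k

theorem exists_chain_of_isClosingLength (hV : 2 < finrank ℝ V) {x : V} (hx : ‖x‖ = 1) {m : ℕ}
    (l : Fin m → ℝ) (hl : ∀ i, l i ∈ Set.Icc 0 1) {z : V} (hz : ‖z‖ = 1) {L : ℝ}
    (hxz : angle x z = π * L) (h : IsClosingLength l L) :
    ∃ p : Fin (m + 1) → V, (∀ k, ‖p k‖ = 1) ∧ p 0 = x ∧ p (Fin.last m) = z ∧
      ∀ k : Fin m, angle (p k.castSucc) (p k.succ) = π * l k := by
  induction m generalizing z L with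
  | zero =>
    have hL : L ≤ 0 := by simpa [vertexDist] using h.2 ∅ (by simp)
    have hxz₀ : angle x z = 0 :=
      le_antisymm (by rw [hxz]; nlinarith [pi_pos]) (angle_nonneg x z)
    exact ⟨fun _ => x, fun _ => hx, rfl, eq_of_angle_eq_zero_of_norm_eq hxz₀ (hx.trans hz.symm),
      finZeroElim⟩
  | succ m ih =>
    set c := l (Fin.last m)
    obtain ⟨hc₀, hc₁⟩ := hl (Fin.last m)
    have hL : L ∈ Set.Icc 0 1 := by
      constructor <;> nlinarith [pi_pos, angle_nonneg x z, angle_le_pi x z]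
    obtain ⟨L', hL', h₁, h₂, h₃⟩ := h.exists_init (hl _) hL
    obtain ⟨y, hy, hxy, hyz⟩ :=
      exists_angle_eq_and_angle_eq hV hx hz (α := π * L') (β := π * c)
      (by rw [hxz, ← mul_sub, abs_mul, abs_of_pos pi_pos]; gcongr)
      (by rw [hxz]; nlinarith [pi_pos]) (by rw [hxz]; nlinarith [pi_pos])
    obtain ⟨p, hp, hp0, hpy, hedge⟩ := ih (Fin.init l) (fun i => hl _) hy hxy hL'
    refine ⟨Fin.snoc p z, Fin.lastCases (by simpa using hz) (by simpa using hp), ?_, by simp,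
      Fin.lastCases ?_ fun j => ?_⟩
    · rw [← Fin.castSucc_zero, Fin.snoc_castSucc, hp0]
    · rw [Fin.snoc_castSucc, Fin.succ_last, Fin.snoc_last, hpy, hyz]
    · rw [Fin.succ_castSucc, Fin.snoc_castSucc, Fin.snoc_castSucc, hedge j]
      rfl

theorem exists_polygon_of_one_le_vertexDist (hV : 2 < finrank ℝ V) {m : ℕ} (l : Fin (m + 1) → ℝ)
    (hl : ∀ i, l i ∈ Set.Icc 0 1)
    (h : ∀ S : Finset (Fin (m + 1)), Odd #S → 1 ≤ vertexDist l S) :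
    ∃ p : Fin (m + 1) → V, (∀ k, ‖p k‖ = 1) ∧ ∀ k, angle (p k) (p (k + 1)) = π * l k := by
  set c := l (Fin.last m)
  obtain ⟨hc₀, hc₁⟩ := hl (Fin.last m)
  obtain ⟨x, hx, -⟩ := exists_norm_eq_one_forall_inner_eq_zero (∅ : Finset V) (by simp; omega)
  have hxx : angle x x = 0 := angle_self (norm_ne_zero_iff.mp (by simp [hx]))
  obtain ⟨z, hz, hxz, -⟩ := exists_angle_eq_and_angle_eq hV hx hx (α := π * c) (β := π * c)
    (by simp [hxx]) (by rw [hxx]; positivity) (by rw [hxx]; nlinarith [pi_pos])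
  obtain ⟨p, hp, hp0, hpz, hedge⟩ :=
    exists_chain_of_isClosingLength hV hx (Fin.init l) (fun i => hl _) hz hxz
      (isClosingLength_init_last (hl _) h)
  refine ⟨p, hp, Fin.lastCases ?_ fun j => ?_⟩
  · rw [Fin.last_add_one, hp0, hpz, angle_comm, hxz]
  · rw [Fin.coeSucc_eq_succ]
    exact hedge j

open Fin.NatCast in
theorem one_le_vertexDist_of_polygon {n : ℕ} [NeZero n] {p : Fin n → V} (hp : ∀ k, p k ≠ 0)
    {l : Fin n → ℝ} (hedge : ∀ k, angle (p k) (p (k + 1)) = π * l k) {S : Finset (Fin n)}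
    (hS : Odd #S) : 1 ≤ vertexDist l S := by
  have h := pi_le_sum_abs_angle_sub (p := fun k : ℕ => p k) (n := n) (by simpa using hp 0)
    (by simp) (S := S.map Fin.valEmbedding) (fun k hk => by
      obtain ⟨i, -, rfl⟩ := mem_map.mp hk
      exact mem_range.mpr i.isLt) (by rwa [card_map])
  rw [← Fin.sum_univ_eq_sum_range] at h
  simp only [Nat.cast_add, Nat.cast_one, Fin.cast_val_eq_self, mem_map, Fin.valEmbedding_apply,
    Fin.val_inj, exists_eq_right, hedge] at h
  have hsum : ∑ i, |π * l i - if i ∈ S then π else 0| = π * vertexDist l S := by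
    rw [vertexDist, mul_sum]
    refine sum_congr rfl fun i _ => ?_
    rw [← abs_of_pos pi_pos, ← abs_mul, abs_of_pos pi_pos]
    split_ifs <;> ring_nf
  rw [hsum] at h
  exact le_of_mul_le_mul_left (by rwa [mul_one]) pi_pos

end InnerProductGeometry

theorem sphereDist4_eq_angle {x y : EuclideanSpace ℝ (Fin 4)} (hx : ‖x‖ = 1) (hy : ‖y‖ = 1) :
    sphereDist4 x y = angle x y := by
  rw [sphereDist4, angle, hx, hy, mul_one, div_one]

/-- For `l ∈ [0,1]ⁿ`, a closed spherical polygon in `S³` with edge lengths `π·l₁, …, π·l_n`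
exists if and only if the `ℓ¹`-distance from `l` to every odd vertex of the unit cube is at
least `1`. -/
theorem spherical_polygon_exists_iff (n : ℕ) [NeZero n] (l : Fin n → ℝ)
    (hl : ∀ i, l i ∈ Set.Icc (0 : ℝ) 1) :
    (∃ p : Fin n → EuclideanSpace ℝ (Fin 4),
        (∀ k, ‖p k‖ = 1) ∧
        ∀ k : Fin n, sphereDist4 (p k) (p (k + 1)) = Real.pi * l k) ↔
      (∀ v : Fin n → ℝ,
        ((∀ i, v i = 0 ∨ v i = 1) ∧ ∃ m : ℤ, ∑ i, v i = 2 * (m : ℝ) + 1) →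
        1 ≤ ∑ i, |l i - v i|) := by
  refine Iff.trans ?_ (forall_zero_one_odd_sum_iff fun v => 1 ≤ ∑ i, |l i - v i|).symm
  constructor
  · rintro ⟨p, hp, hedge⟩ S hS
    refine one_le_vertexDist_of_polygon (p := p) (fun k h₀ => by simpa [h₀] using hp k)
      (fun k => ?_) hS
    rw [← sphereDist4_eq_angle (hp _) (hp _), hedge]
  · intro h
    obtain ⟨m, rfl⟩ := Nat.exists_eq_succ_of_ne_zero (NeZero.ne n)
    obtain ⟨p, hp, hedge⟩ := exists_polygon_of_one_le_vertexDist (V := EuclideanSpace ℝ (Fin 4))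
      (by rw [finrank_euclideanSpace_fin]; norm_num) l hl h
    exact ⟨p, hp, fun k => by rw [sphereDist4_eq_angle (hp _) (hp _), hedge]⟩
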